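/- Split-exactness: Let F be a functor from the category BanAlg of Banach algebras and continuous homomorphisms into an additive category, and assume F is homotopy invariant and half-exact for semi-split extensions. Then F is split-exact: for every extension B ↣^i D ↠^π A of Banach algebras admitting a continuous homomorphism σ : A → D with π∘σ = id_A, the morphism F(i) ⊕ F(σ) : F(B) ⊕ F(A) → F(D) (from the biproduct, with components F(i) and F(σ)) is an isomorphism. -/

import Mathlib

set_option linter.unusedSectionVars false
noncomputable section
open scoped unitInterval

section Vanish
variable (X : Type) [TopologicalSpace X] (A : Type) [NonUnitalNormedRing A] [NormedSpace ℂ A]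
  [IsScalarTower ℂ A A] [SMulCommClass ℂ A A]

/-- The subalgebra of continuous functions vanishing on `Y`. -/
def vanishAlg (Y : Set X) : NonUnitalSubalgebra ℂ C(X, A) where
  carrier := {f | ∀ y ∈ Y, f y = 0}
  add_mem' hf hg y hy := by simp [hf y hy, hg y hy]
  zero_mem' y hy := rfl
  mul_mem' hf hg y hy := by simp [hg y hy]
  smul_mem' c f hf y hy := by simp [hf y hy]

variable {X A}

@[simp] lemma mem_vanishAlg {Y : Set X} {f : C(X, A)} :
    f ∈ vanishAlg X A Y ↔ ∀ y ∈ Y, f y = 0 := Iff.rfl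

lemma isClosed_vanishAlg (Y : Set X) : IsClosed ((vanishAlg X A Y : Set C(X, A))) := by
  have : (vanishAlg X A Y : Set C(X, A)) = ⋂ y ∈ Y, {f : C(X, A) | f y = 0} := by
    ext f; simp [Set.mem_iInter]
  rw [this]
  exact isClosed_biInter fun y _ =>
    isClosed_eq (continuous_eval_const y) continuous_const

end Vanish

section Susp
variable (A : Type) [NonUnitalNormedRing A] [NormedSpace ℂ A] [IsScalarTower ℂ A A] [SMulCommClass ℂ A A]

/-- `ΣA`, the suspension of `A`: continuous functions on `[0,1]` vanishing at both endpoints. -/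
def suspAlg : NonUnitalSubalgebra ℂ C(unitInterval, A) := vanishAlg unitInterval A {0, 1}

variable {A} {B : Type} [NonUnitalNormedRing B] [NormedSpace ℂ B] [IsScalarTower ℂ B B] [SMulCommClass ℂ B B]

lemma susp_apply_zero (f : suspAlg A) : f.1 0 = 0 := f.2 0 (Set.mem_insert _ _)
lemma susp_apply_one (f : suspAlg A) : f.1 1 = 0 := f.2 1 (Set.mem_insert_of_mem _ rfl)

/-- Postcomposition with a continuous homomorphism. -/
def postcompHom (φ : A →ₙₐ[ℂ] B) (hφ : Continuous φ) :
    C(unitInterval, A) →ₙₐ[ℂ] C(unitInterval, B) where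
  toFun f := (⟨⇑φ, hφ⟩ : C(A, B)).comp f
  map_smul' c f := by ext t; simp
  map_zero' := by ext t; simp
  map_add' f g := by ext t; simp
  map_mul' f g := by ext t; simp

@[simp] lemma postcompHom_apply (φ : A →ₙₐ[ℂ] B) (hφ : Continuous φ) (f : C(unitInterval, A))
    (t : unitInterval) : postcompHom φ hφ f t = φ (f t) := rfl

/-- `Σφ`, the suspension of a continuous homomorphism `φ`. -/
def suspMap (φ : A →ₙₐ[ℂ] B) (hφ : Continuous φ) : suspAlg A →ₙₐ[ℂ] suspAlg B where
  toFun f := ⟨postcompHom φ hφ f.1, by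
    rintro y (rfl | rfl)
    · simp [susp_apply_zero f]
    · simp [susp_apply_one f]⟩
  map_smul' c f := by apply Subtype.ext; exact map_smul (postcompHom φ hφ) c f.1
  map_zero' := by apply Subtype.ext; exact map_zero (postcompHom φ hφ)
  map_add' f g := by apply Subtype.ext; exact map_add (postcompHom φ hφ) f.1 g.1
  map_mul' f g := by apply Subtype.ext; exact map_mul (postcompHom φ hφ) f.1 g.1

@[simp] lemma suspMap_apply (φ : A →ₙₐ[ℂ] B) (hφ : Continuous φ) (f : suspAlg A) (t : unitInterval) :
    ((suspMap φ hφ f : suspAlg B) : C(unitInterval, B)) t = φ (f.1 t) := rfl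

lemma continuous_suspMap (φ : A →ₙₐ[ℂ] B) (hφ : Continuous φ) : Continuous (suspMap φ hφ) := by
  apply Continuous.subtype_mk
  exact (ContinuousMap.continuous_postcomp _).comp continuous_subtype_val

end Susp

section MappingCone
variable {D A : Type}
  [NonUnitalNormedRing D] [NormedSpace ℂ D] [IsScalarTower ℂ D D] [SMulCommClass ℂ D D]
  [NonUnitalNormedRing A] [NormedSpace ℂ A] [IsScalarTower ℂ A A] [SMulCommClass ℂ A A]

/-- The mapping cone `C_π = {(c, d) ∈ CA × D : c(1) = 0, c(0) = π(d)}` of `π : D → A`,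
as a closed subalgebra of `C([0,1], A) × D` (with the maximum norm). -/
def mappingCone (π : D →ₙₐ[ℂ] A) : NonUnitalSubalgebra ℂ (C(unitInterval, A) × D) where
  carrier := {p | p.1 1 = 0 ∧ p.1 0 = π p.2}
  add_mem' := by
    rintro p q ⟨hp1, hp0⟩ ⟨hq1, hq0⟩
    exact ⟨by simp [hp1, hq1], by simp [hp0, hq0]⟩
  zero_mem' := ⟨rfl, by simp⟩
  mul_mem' := by
    rintro p q ⟨hp1, hp0⟩ ⟨hq1, hq0⟩
    exact ⟨by simp [hp1, hq1], by simp [hp0, hq0]⟩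
  smul_mem' := by
    rintro c p ⟨hp1, hp0⟩
    exact ⟨by simp [hp1], by simp [hp0]⟩

@[simp] lemma mem_mappingCone {π : D →ₙₐ[ℂ] A} {p : C(unitInterval, A) × D} :
    p ∈ mappingCone π ↔ p.1 1 = 0 ∧ p.1 0 = π p.2 := Iff.rfl

lemma isClosed_mappingCone (π : D →ₙₐ[ℂ] A) (hπ : Continuous π) :
    IsClosed ((mappingCone π : Set (C(unitInterval, A) × D))) := by
  have h1 : IsClosed {p : C(unitInterval, A) × D | p.1 1 = 0} :=
    isClosed_eq ((continuous_eval_const 1).comp continuous_fst) continuous_const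
  have h2 : IsClosed {p : C(unitInterval, A) × D | p.1 0 = π p.2} :=
    isClosed_eq ((continuous_eval_const 0).comp continuous_fst)
      (hπ.comp continuous_snd)
  exact h1.inter h2

/-- The canonical epimorphism `ε(π) : C_π → D, (c, d) ↦ d`. -/
def coneEps (π : D →ₙₐ[ℂ] A) : mappingCone π →ₙₐ[ℂ] D where
  toFun p := p.1.2
  map_smul' _ _ := rfl
  map_zero' := rfl
  map_add' _ _ := rfl
  map_mul' _ _ := rfl

lemma continuous_coneEps (π : D →ₙₐ[ℂ] A) : Continuous (coneEps π) :=
  continuous_snd.comp continuous_subtype_val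

/-- The canonical inclusion `ι(π) : ΣA → C_π, f ↦ (f, 0)`. -/
def coneIota (π : D →ₙₐ[ℂ] A) : suspAlg A →ₙₐ[ℂ] mappingCone π where
  toFun f := ⟨(f.1, 0), ⟨susp_apply_one f, by simp [susp_apply_zero f]⟩⟩
  map_smul' c f := by apply Subtype.ext; exact Prod.ext (by rfl) (by simp)
  map_zero' := by apply Subtype.ext; exact Prod.ext (by rfl) (by simp)
  map_add' f g := by apply Subtype.ext; exact Prod.ext (by rfl) (by simp)
  map_mul' f g := by apply Subtype.ext; exact Prod.ext (by rfl) (by simp)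

lemma continuous_coneIota (π : D →ₙₐ[ℂ] A) : Continuous (coneIota π) := by
  apply Continuous.subtype_mk
  exact (continuous_subtype_val).prodMk continuous_const

end MappingCone

section Homotopy
/-- Two continuous homomorphisms `φ, ψ : A → B` are homotopic if there is a continuous
homomorphism `H : A → C([0,1], B)` with `ev₀ ∘ H = φ` and `ev₁ ∘ H = ψ`. -/
def NAlgHomotopic {A B : Type} [NonUnitalNonAssocSemiring A] [Module ℂ A] [TopologicalSpace A]
    [NonUnitalNonAssocSemiring B] [Module ℂ B] [TopologicalSpace B] [IsTopologicalSemiring B]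
    [ContinuousConstSMul ℂ B] (φ ψ : A →ₙₐ[ℂ] B) : Prop :=
  ∃ H : A →ₙₐ[ℂ] C(unitInterval, B),
    Continuous H ∧ (∀ a, H a 0 = φ a) ∧ (∀ a, H a 1 = ψ a)
end Homotopy

open CategoryTheory

/-- A bundled (possibly non-unital, possibly degenerate) complex Banach algebra. -/
structure BanAlg : Type 1 where
  carrier : Type
  [nonUnitalNormedRing : NonUnitalNormedRing carrier]
  [normedSpace : NormedSpace ℂ carrier]
  [isScalarTower : IsScalarTower ℂ carrier carrier]
  [smulCommClass : SMulCommClass ℂ carrier carrier]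
  [completeSpace : CompleteSpace carrier]

namespace BanAlg

attribute [instance] nonUnitalNormedRing normedSpace isScalarTower smulCommClass completeSpace

instance : CoeSort BanAlg Type := ⟨carrier⟩

/-- Build a bundled Banach algebra from an unbundled one. -/
def of (A : Type) [NonUnitalNormedRing A] [NormedSpace ℂ A] [IsScalarTower ℂ A A]
    [SMulCommClass ℂ A A] [CompleteSpace A] : BanAlg := ⟨A⟩

/-- The category `BanAlg` of Banach algebras and continuous algebra homomorphisms. -/
instance : Category BanAlg where
  Hom A B := {f : A →ₙₐ[ℂ] B // Continuous f}
  id A := ⟨NonUnitalAlgHom.id ℂ A, continuous_id⟩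
  comp f g := ⟨g.1.comp f.1, g.2.comp f.2⟩
  id_comp f := Subtype.ext (by ext x; rfl)
  comp_id f := Subtype.ext (by ext x; rfl)
  assoc f g h := Subtype.ext (by ext x; rfl)

/-- A closed subalgebra of a Banach algebra is a Banach algebra. -/
def ofSubalg {R : Type} [NonUnitalNormedRing R] [NormedSpace ℂ R] [IsScalarTower ℂ R R]
    [SMulCommClass ℂ R R] [CompleteSpace R] (S : NonUnitalSubalgebra ℂ R)
    (hS : IsClosed (S : Set R)) : BanAlg :=
  letI : CompleteSpace S := hS.completeSpace_coe
  letI : NormedSpace ℂ S := SubmoduleClass.toNormedSpace S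
  BanAlg.of S

end BanAlg

/-- The suspension, as an object of `BanAlg`. -/
def suspObj (A : BanAlg) : BanAlg := BanAlg.ofSubalg (suspAlg A) (isClosed_vanishAlg _)

/-- The suspension of a morphism of `BanAlg`. -/
def suspHom {A B : BanAlg} (f : A ⟶ B) : suspObj A ⟶ suspObj B :=
  ⟨suspMap f.1 f.2, continuous_suspMap f.1 f.2⟩

/-- The suspension functor `Σ : BanAlg ⥤ BanAlg`. -/
def suspFunctor : BanAlg ⥤ BanAlg where
  obj := suspObj
  map := suspHom
  map_id := by
    intro A
    apply Subtype.ext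
    apply NonUnitalAlgHom.ext
    intro f
    apply Subtype.ext
    ext t
    rfl
  map_comp := by
    intro A B C f g
    apply Subtype.ext
    apply NonUnitalAlgHom.ext
    intro x
    apply Subtype.ext
    ext t
    rfl

/-- The mapping cone of a morphism of `BanAlg`, as an object of `BanAlg`. -/
def coneObj {D A : BanAlg} (π : D ⟶ A) : BanAlg :=
  BanAlg.ofSubalg (mappingCone π.1) (isClosed_mappingCone π.1 π.2)

/-- The canonical inclusion `ι(π) : ΣA → C_π`, as a morphism of `BanAlg`. -/
def coneIotaHom {D A : BanAlg} (π : D ⟶ A) : suspObj A ⟶ coneObj π :=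
  ⟨coneIota π.1, continuous_coneIota π.1⟩

/-- Extensions of Banach algebras: `i` is injective with closed range, `π` is surjective,
and `range i = ker π`. -/
structure IsExtensionHom {B D A : BanAlg} (i : B ⟶ D) (π : D ⟶ A) : Prop where
  inj : Function.Injective i.1
  closedRange : IsClosed (Set.range i.1)
  surj : Function.Surjective π.1
  exact : Set.range i.1 = {d | π.1 d = 0}

/-- A (quotient map of an) extension is semi-split if it admits a continuous linear
(not necessarily multiplicative) section. -/
def IsSemiSplit {D A : BanAlg} (π : D ⟶ A) : Prop :=
  ∃ s : A.carrier →L[ℂ] D.carrier, ∀ a, π.1 (s a) = a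

/-- The canonical comparison morphism `κ_π : B → C_π`, `b ↦ (0, i(b))`. -/
def coneKappaHom {B D A : BanAlg} (i : B ⟶ D) (π : D ⟶ A) (hext : IsExtensionHom i π) :
    B ⟶ coneObj π := by
  have hker : ∀ b, (0 : A.carrier) = π.1 (i.1 b) := by
    intro b
    have : i.1 b ∈ {d | π.1 d = 0} := hext.exact ▸ Set.mem_range_self b
    exact this.symm
  refine ⟨{ toFun := fun b => ⟨((0 : C(unitInterval, A.carrier)), i.1 b), ⟨rfl, hker b⟩⟩,
            map_smul' := ?_, map_zero' := ?_, map_add' := ?_, map_mul' := ?_ }, ?_⟩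
  · intro c b
    apply Subtype.ext
    refine Prod.ext ?_ ?_
    · simp only [map_smul]; exact (smul_zero c).symm
    · simp only [map_smul]; rfl
  · apply Subtype.ext; exact Prod.ext (by simp <;> rfl) (by simp <;> rfl)
  · intro a b
    apply Subtype.ext
    refine Prod.ext ?_ ?_
    · simp only [map_add]; exact (add_zero 0).symm
    · simp only [map_add]; rfl
  · intro a b
    apply Subtype.ext
    refine Prod.ext ?_ ?_
    · simp only [map_mul]; exact (mul_zero 0).symm
    · simp only [map_mul]; rfl
  · exact Continuous.subtype_mk (continuous_const.prodMk (i.2.comp continuous_id)) _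

/-- A functor on `BanAlg` is homotopy invariant if it identifies homotopic morphisms. -/
def HomotopyInvariant {𝒞 : Type*} [Category 𝒞] (F : BanAlg ⥤ 𝒞) : Prop :=
  ∀ (A B : BanAlg) (f g : A ⟶ B), NAlgHomotopic f.1 g.1 → F.map f = F.map g

/-- A functor on `BanAlg` with values in an additive category is half-exact for semi-split
extensions if, for every object `X` and every semi-split extension `B ↣ D ↠ A`, the
sequences of abelian groups `Hom(X,F(B)) → Hom(X,F(D)) → Hom(X,F(A))` and
`Hom(F(A),X) → Hom(F(D),X) → Hom(F(B),X)` are exact in the middle. -/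
def HalfExactFunctor {𝒞 : Type*} [Category 𝒞] [Preadditive 𝒞] (F : BanAlg ⥤ 𝒞) : Prop :=
  ∀ (B D A : BanAlg) (i : B ⟶ D) (π : D ⟶ A), IsExtensionHom i π → IsSemiSplit π →
    ∀ X : 𝒞,
      Function.Exact (fun u : X ⟶ F.obj B => u ≫ F.map i)
        (fun u : X ⟶ F.obj D => u ≫ F.map π) ∧
      Function.Exact (fun u : F.obj A ⟶ X => F.map π ≫ u)
        (fun u : F.obj D ⟶ X => F.map i ≫ u)

/-- A functor on `BanAlg` with values in an additive category is split-exact if for every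
split extension `B ↣ D ↠ A` with multiplicative continuous section `σ`, the induced map
`F(B) ⊕ F(A) → F(D)` is an isomorphism. -/
def SplitExactFunctor {𝒞 : Type*} [Category 𝒞] [Preadditive 𝒞]
    [Limits.HasBinaryBiproducts 𝒞] (F : BanAlg ⥤ 𝒞) : Prop :=
  ∀ (B D A : BanAlg) (i : B ⟶ D) (π : D ⟶ A) (s : A ⟶ D),
    IsExtensionHom i π → s ≫ π = 𝟙 A →
    IsIso (Limits.biprod.desc (F.map i) (F.map s))

/-!
By half-exactness at `F(D)`, the idempotent `𝟙 - F(π) F(σ)` factors as `r ≫ F(i)`; so `(r, F(π))`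
splits the short complex `F(B) → F(D) → F(A)` as soon as `F(i)` is a monomorphism, and then
`F(i) ⊕ F(σ)` is inverse to `(r, F(π))`.

For the monomorphism, factor `i` as `B → Y → C_π → D`, where `Y` consists of the paths in `D` ending
in `ker π`, the first map sends `b` to the constant path at `i b`, the second is
`f ↦ (π ∘ f, f 0)` and the last is the projection of the mapping cone. The first map has the
retraction `f ↦ i⁻¹ (f 1)`, continuous by the open mapping theorem. The second and third maps are
semi-split surjections, with kernels the cone over `ker π` (contractible) and `ΣA`, whose inclusion
into `C_π` is nullhomotopic thanks to the multiplicative section `σ`. Half-exactness and homotopy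
invariance make `F` send both surjections to monomorphisms.
-/

namespace BanAlg

@[ext] lemma hom_ext {A B : BanAlg} {f g : A ⟶ B} (h : ∀ x, f.1 x = g.1 x) : f = g :=
  Subtype.ext (NonUnitalAlgHom.ext h)

instance : Limits.HasZeroMorphisms BanAlg where
  zero _ _ := ⟨⟨0, continuous_const⟩⟩
  comp_zero _ _ := hom_ext fun _ => rfl
  zero_comp _ _ _ f := hom_ext fun _ => map_zero f.1

def zero : BanAlg := of PUnit

def toCLM {A B : BanAlg} (f : A ⟶ B) : A →L[ℂ] B := ⟨f.1, f.2⟩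

section LiftOfRange

variable {P B D : BanAlg} (i : B ⟶ D) (hi : Function.Injective i.1)
  (hc : IsClosed (Set.range i.1))

lemma apply_equivRange_symm (y : (toCLM i).range) :
    i.1 (((toCLM i).equivRange hi hc).symm y) = y :=
  congrArg Subtype.val (((toCLM i).equivRange hi hc).apply_symm_apply y)

/-- The lift is continuous by the open mapping theorem. -/
def liftOfRange (φ : P ⟶ D) (hφ : ∀ x, φ.1 x ∈ Set.range i.1) : P ⟶ B where
  val :=
    { toFun x := ((toCLM i).equivRange hi hc).symm ⟨φ.1 x, LinearMap.mem_range.2 (hφ x)⟩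
      map_smul' c x := hi <| by simp only [apply_equivRange_symm, map_smul]; rfl
      map_zero' := hi <| by simp only [apply_equivRange_symm, map_zero]
      map_add' x y := hi <| by simp only [apply_equivRange_symm, map_add]
      map_mul' x y := hi <| by simp only [apply_equivRange_symm, map_mul] }
  property := ((toCLM i).equivRange hi hc).symm.continuous.comp (φ.2.subtype_mk _)

lemma liftOfRange_comp (φ : P ⟶ D) (hφ : ∀ x, φ.1 x ∈ Set.range i.1) :
    liftOfRange i hi hc φ hφ ≫ i = φ :=
  hom_ext fun _ => apply_equivRange_symm i hi hc _

end LiftOfRange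

end BanAlg

open BanAlg

lemma IsExtensionHom.comp_apply_eq_zero {B D A : BanAlg} {i : B ⟶ D} {π : D ⟶ A}
    (hext : IsExtensionHom i π) (b : B) : π.1 (i.1 b) = 0 := by
  have : i.1 b ∈ {d | π.1 d = 0} := hext.exact ▸ Set.mem_range_self b
  exact this

lemma IsSemiSplit.surjective {D A : BanAlg} {π : D ⟶ A} (h : IsSemiSplit π) :
    Function.Surjective π.1 :=
  fun a => ⟨h.choose a, h.choose_spec a⟩

lemma isSemiSplit_of_comp_eq_id {D A : BanAlg} {π : D ⟶ A} {s : A ⟶ D} (hs : s ≫ π = 𝟙 A) :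
    IsSemiSplit π :=
  ⟨toCLM s, fun a => congr($hs.1 a)⟩

lemma isExtensionHom_id_zero (Q : BanAlg) : IsExtensionHom (𝟙 Q) (0 : Q ⟶ BanAlg.zero) where
  inj _ _ h := h
  closedRange := by
    convert isClosed_univ
    exact Set.range_eq_univ.2 fun x => ⟨x, rfl⟩
  surj _ := ⟨0, rfl⟩
  exact := Set.ext fun x => ⟨fun _ => rfl, fun _ => ⟨x, rfl⟩⟩

namespace HalfExactFunctor

variable {𝒞 : Type*} [Category 𝒞] [Preadditive 𝒞] {F : BanAlg ⥤ 𝒞}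
  {B D A : BanAlg} {i : B ⟶ D} {π : D ⟶ A}

lemma map_comp_map_eq_zero (hF : HalfExactFunctor F) (hext : IsExtensionHom i π)
    (hss : IsSemiSplit π) : F.map i ≫ F.map π = 0 :=
  ((hF B D A i π hext hss (F.obj B)).1 (F.map i)).2 ⟨𝟙 _, Category.id_comp _⟩

lemma map_zero (hF : HalfExactFunctor F) (P Q : BanAlg) : F.map (0 : P ⟶ Q) = 0 := by
  have h : F.map (0 : P ⟶ BanAlg.zero) = 0 := by
    simpa using hF.map_comp_map_eq_zero (isExtensionHom_id_zero P) ⟨0, fun _ => rfl⟩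
  rw [← Limits.comp_zero (f := (0 : P ⟶ BanAlg.zero)), F.map_comp, h, Limits.zero_comp]

lemma mono_map_of_map_eq_zero (hF : HalfExactFunctor F) (hext : IsExtensionHom i π)
    (hss : IsSemiSplit π) (hi : F.map i = 0) : Mono (F.map π) :=
  Preadditive.mono_of_cancel_zero _ fun g hg => by
    obtain ⟨v, rfl⟩ := ((hF B D A i π hext hss _).1 g).1 hg
    simp [hi]

end HalfExactFunctor

lemma HomotopyInvariant.map_eq_zero {𝒞 : Type*} [Category 𝒞] [Preadditive 𝒞]
    {F : BanAlg ⥤ 𝒞} (hh : HomotopyInvariant F) (hF : HalfExactFunctor F) {P Q : BanAlg}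
    {f : P ⟶ Q} (hf : NAlgHomotopic f.1 0) : F.map f = 0 :=
  (hh P Q f 0 hf).trans (hF.map_zero P Q)

def linePath (E : Type) [NormedAddCommGroup E] [NormedSpace ℂ E] : E →L[ℂ] C(I, E) where
  toFun v := ⟨fun t => ((σ t : ℝ) : ℂ) • v, by fun_prop⟩
  map_add' _ _ := by ext; simp [smul_add]
  map_smul' _ _ := by ext; simp [smul_smul, mul_comm]
  cont := ContinuousMap.continuous_of_continuous_uncurry _
    (show Continuous fun p : E × I => ((σ p.2 : ℝ) : ℂ) • p.1 by fun_prop)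

@[simp] lemma linePath_apply {E : Type} [NormedAddCommGroup E] [NormedSpace ℂ E] (v : E)
    (t : I) : linePath E v t = ((σ t : ℝ) : ℂ) • v := rfl

lemma linePath_zero {E : Type} [NormedAddCommGroup E] [NormedSpace ℂ E] (v : E) :
    linePath E v 0 = v := by simp

lemma linePath_one {E : Type} [NormedAddCommGroup E] [NormedSpace ℂ E] (v : E) :
    linePath E v 1 = 0 := by simp

def shrinkToZero : C(I × I, I) := ⟨fun p => σ p.1 * p.2, by fun_prop⟩

def shrinkToOne : C(I × I, I) := ⟨fun p => σ (σ p.1 * σ p.2), by fun_prop⟩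

lemma continuous_comp_curry {E : Type} [TopologicalSpace E] (φ : C(I × I, I)) :
    Continuous fun p : C(I, E) × I => p.1.comp (φ.curry p.2) :=
  ContinuousMap.continuous_comp'.comp
    ((φ.curry.continuous.comp continuous_snd).prodMk continuous_fst)

section PathAlgebras

variable {B D A : BanAlg}

def kerEndPaths (π : D ⟶ A) : NonUnitalSubalgebra ℂ C(I, D) where
  carrier := {f | π.1 (f 1) = 0}
  add_mem' hf hg := by simp_all
  zero_mem' := by simp
  mul_mem' hf hg := by simp_all
  smul_mem' c f hf := by simp_all

def kerCone (π : D ⟶ A) : NonUnitalSubalgebra ℂ C(I, D) where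
  carrier := {f | f 0 = 0 ∧ ∀ t, π.1 (f t) = 0}
  add_mem' hf hg := ⟨by simp [hf.1, hg.1], fun t => by simp [hf.2 t, hg.2 t]⟩
  zero_mem' := ⟨rfl, fun t => by simp⟩
  mul_mem' hf hg := ⟨by simp [hf.1, hg.1], fun t => by simp [hf.2 t, hg.2 t]⟩
  smul_mem' c f hf := ⟨by simp [hf.1], fun t => by simp [hf.2 t]⟩

lemma kerCone_le_kerEndPaths (π : D ⟶ A) : kerCone π ≤ kerEndPaths π := fun _ hf => hf.2 1

lemma isClosed_kerEndPaths (π : D ⟶ A) : IsClosed (kerEndPaths π : Set C(I, D)) :=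
  isClosed_eq (π.2.comp (continuous_eval_const 1)) continuous_const

lemma isClosed_kerCone (π : D ⟶ A) : IsClosed (kerCone π : Set C(I, D)) := by
  change IsClosed {f : C(I, D) | f 0 = 0 ∧ ∀ t, π.1 (f t) = 0}
  rw [Set.ofPred_and, Set.ofPred_forall]
  exact (isClosed_eq (continuous_eval_const 0) continuous_const).inter <|
    isClosed_iInter fun t => isClosed_eq (π.2.comp (continuous_eval_const t)) continuous_const

def kerEndPathsObj (π : D ⟶ A) : BanAlg := BanAlg.ofSubalg _ (isClosed_kerEndPaths π)

def kerConeObj (π : D ⟶ A) : BanAlg := BanAlg.ofSubalg _ (isClosed_kerCone π)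

def kerConeIncl (π : D ⟶ A) : kerConeObj π ⟶ kerEndPathsObj π :=
  ⟨NonUnitalSubalgebra.inclusion (kerCone_le_kerEndPaths π),
    continuous_subtype_val.subtype_mk _⟩

def kerEndPathsToCone (π : D ⟶ A) : kerEndPathsObj π ⟶ coneObj π where
  val :=
    { toFun f := ⟨(postcompHom π.1 π.2 f.1, f.1 0), f.2, rfl⟩
      map_smul' c f := Subtype.ext <| Prod.ext (map_smul (postcompHom π.1 π.2) c f.1) rfl
      map_zero' := Subtype.ext <| Prod.ext (map_zero (postcompHom π.1 π.2)) rfl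
      map_add' f g := Subtype.ext <| Prod.ext (map_add (postcompHom π.1 π.2) f.1 g.1) rfl
      map_mul' f g := Subtype.ext <| Prod.ext (map_mul (postcompHom π.1 π.2) f.1 g.1) rfl }
  property := Continuous.subtype_mk
    (((ContinuousMap.continuous_postcomp _).comp continuous_subtype_val).prodMk
      ((continuous_eval_const 0).comp continuous_subtype_val)) _

def coneEpsHom (π : D ⟶ A) : coneObj π ⟶ D := ⟨coneEps π.1, continuous_coneEps π.1⟩

def evalOneHom (π : D ⟶ A) : kerEndPathsObj π ⟶ D where
  val :=
    { toFun f := f.1 1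
      map_smul' _ _ := rfl
      map_zero' := rfl
      map_add' _ _ := rfl
      map_mul' _ _ := rfl }
  property := (continuous_eval_const 1).comp continuous_subtype_val

def constPaths {i : B ⟶ D} {π : D ⟶ A} (hext : IsExtensionHom i π) :
    B ⟶ kerEndPathsObj π where
  val :=
    { toFun b := ⟨ContinuousMap.const I (i.1 b), hext.comp_apply_eq_zero b⟩
      map_smul' c b := Subtype.ext <| ContinuousMap.ext fun _ => map_smul i.1 c b
      map_zero' := Subtype.ext <| ContinuousMap.ext fun _ => map_zero i.1
      map_add' a b := Subtype.ext <| ContinuousMap.ext fun _ => map_add i.1 a b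
      map_mul' a b := Subtype.ext <| ContinuousMap.ext fun _ => map_mul i.1 a b }
  property := (ContinuousMap.continuous_const'.comp i.2).subtype_mk _

def constPathsRetraction {i : B ⟶ D} {π : D ⟶ A} (hext : IsExtensionHom i π) :
    kerEndPathsObj π ⟶ B :=
  liftOfRange i hext.inj hext.closedRange (evalOneHom π) fun f => hext.exact ▸ f.2

lemma constPaths_comp_constPathsRetraction {i : B ⟶ D} {π : D ⟶ A}
    (hext : IsExtensionHom i π) : constPaths hext ≫ constPathsRetraction hext = 𝟙 B := by
  ext b
  apply hext.inj
  exact congr($(liftOfRange_comp i hext.inj hext.closedRange (evalOneHom π)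
    fun f => hext.exact ▸ f.2).1 ((constPaths hext).1 b))

lemma constPaths_comp_kerEndPathsToCone_comp_coneEpsHom {i : B ⟶ D} {π : D ⟶ A}
    (hext : IsExtensionHom i π) :
    constPaths hext ≫ kerEndPathsToCone π ≫ coneEpsHom π = i :=
  rfl

end PathAlgebras

section ConeExtensions

variable {D A : BanAlg}

lemma isSemiSplit_coneEpsHom (π : D ⟶ A) : IsSemiSplit (coneEpsHom π) :=
  ⟨(((linePath A).comp (toCLM π)).prod (.id ℂ D)).codRestrict (mappingCone π.1).toSubmodule
    fun _ => ⟨linePath_one _, linePath_zero _⟩, fun _ => rfl⟩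

lemma range_coneIotaHom (π : D ⟶ A) :
    Set.range (coneIotaHom π).1 = {p | (coneEpsHom π).1 p = 0} := by
  ext p
  refine ⟨by rintro ⟨f, rfl⟩; rfl, fun hp => ⟨⟨p.1.1, ?_⟩, Subtype.ext (Prod.ext rfl hp.symm)⟩⟩
  rintro t (rfl | rfl)
  · rw [p.2.2, show p.1.2 = 0 from hp, map_zero]
  · exact p.2.1

lemma isExtensionHom_coneIotaHom (π : D ⟶ A) :
    IsExtensionHom (coneIotaHom π) (coneEpsHom π) where
  inj _ _ h := Subtype.ext congr(($h).1.1)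
  closedRange := range_coneIotaHom π ▸ isClosed_eq (coneEpsHom π).2 continuous_const
  surj := (isSemiSplit_coneEpsHom π).surjective
  exact := range_coneIotaHom π

def liftPath (s : A →L[ℂ] D) : C(I, A) × D →L[ℂ] C(I, D) :=
  (s.compLeftContinuous ℂ I).comp (.fst ℂ _ _) +
    (linePath D).comp (.snd ℂ _ _ - s.comp ((ContinuousMap.evalCLM ℂ 0).comp (.fst ℂ _ _)))

@[simp] lemma liftPath_apply (s : A →L[ℂ] D) (p : C(I, A) × D) (t : I) :
    liftPath s p t = s (p.1 t) + ((σ t : ℝ) : ℂ) • (p.2 - s (p.1 0)) :=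
  rfl

def kerEndPathsSection {π : D ⟶ A} (s : A →L[ℂ] D) :
    (coneObj π).carrier →L[ℂ] (kerEndPathsObj π).carrier :=
  ((liftPath s).comp (mappingCone π.1).toSubmodule.subtypeL).codRestrict
    (kerEndPaths π).toSubmodule fun p => show π.1 (liftPath s p.1 1) = 0 by simp [p.2.1]

lemma kerEndPathsToCone_kerEndPathsSection {π : D ⟶ A} (s : A →L[ℂ] D)
    (hs : ∀ a, π.1 (s a) = a) (p : (coneObj π).carrier) :
    (kerEndPathsToCone π).1 (kerEndPathsSection s p) = p := by
  refine Subtype.ext (Prod.ext (ContinuousMap.ext fun t => ?_) ?_)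
  · show π.1 (liftPath s p.1 t) = p.1.1 t
    simp [hs, ← p.2.2]
  · show liftPath s p.1 0 = p.1.2
    simp

lemma isSemiSplit_kerEndPathsToCone {π : D ⟶ A} (h : IsSemiSplit π) :
    IsSemiSplit (kerEndPathsToCone π) :=
  ⟨kerEndPathsSection h.choose, kerEndPathsToCone_kerEndPathsSection h.choose h.choose_spec⟩

lemma range_kerConeIncl (π : D ⟶ A) :
    Set.range (kerConeIncl π).1 = {f | (kerEndPathsToCone π).1 f = 0} := by
  ext f
  refine ⟨by rintro ⟨g, rfl⟩; exact Subtype.ext (Prod.ext (ContinuousMap.ext g.2.2) g.2.1),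
    fun hf => ⟨⟨f.1, ?_, ?_⟩, rfl⟩⟩
  · exact congr(($hf).1.2)
  · exact fun t => congr(($hf).1.1 t)

lemma isExtensionHom_kerConeIncl {π : D ⟶ A} (h : IsSemiSplit π) :
    IsExtensionHom (kerConeIncl π) (kerEndPathsToCone π) where
  inj _ _ h := Subtype.ext congr(($h).1)
  closedRange := range_kerConeIncl π ▸ isClosed_eq (kerEndPathsToCone π).2 continuous_const
  surj := (isSemiSplit_kerEndPathsToCone h).surjective
  exact := range_kerConeIncl π

end ConeExtensions

section Homotopies

variable {D A : BanAlg}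

def kerConeContraction (π : D ⟶ A) : kerConeObj π →ₙₐ[ℂ] C(I, kerConeObj π) where
  toFun f := ⟨fun u => ⟨f.1.comp (shrinkToZero.curry u), by simp [shrinkToZero, f.2.1],
      fun _ => f.2.2 _⟩,
    ((continuous_comp_curry shrinkToZero).comp (Continuous.prodMk_right f.1)).subtype_mk _⟩
  map_smul' _ _ := rfl
  map_zero' := rfl
  map_add' _ _ := rfl
  map_mul' _ _ := rfl

lemma nalgHomotopic_id_zero_kerCone (π : D ⟶ A) :
    NAlgHomotopic (𝟙 (kerConeObj π) : kerConeObj π ⟶ _).1 0 := by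
  refine ⟨kerConeContraction π, ContinuousMap.continuous_of_continuous_uncurry _ ?_,
    fun f => ?_, fun f => ?_⟩
  · exact ((continuous_comp_curry shrinkToZero).comp
      (continuous_subtype_val.prodMap continuous_id)).subtype_mk _
  · exact Subtype.ext (ContinuousMap.ext fun t => show f.1 (σ 0 * t) = f.1 t by simp)
  · exact Subtype.ext (ContinuousMap.ext fun t => show f.1 (σ 1 * t) = 0 by simp [f.2.1])

def coneIotaNullhomotopy {π : D ⟶ A} {s : A ⟶ D} (hs : s ≫ π = 𝟙 A) :
    suspObj A →ₙₐ[ℂ] C(I, coneObj π) where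
  toFun g := ⟨fun u => ⟨(g.1.comp (shrinkToOne.curry u), s.1 (g.1 u)),
      show g.1 (σ (σ u * σ 1)) = 0 by simpa using susp_apply_one g,
      show g.1 (σ (σ u * σ 0)) = π.1 (s.1 (g.1 u)) by
        rw [show π.1 (s.1 (g.1 u)) = g.1 u from congr(($hs).1 (g.1 u))]; simp⟩,
    (((continuous_comp_curry shrinkToOne).comp (Continuous.prodMk_right g.1)).prodMk
      (s.2.comp g.1.continuous)).subtype_mk _⟩
  map_smul' c g := ContinuousMap.ext fun u => Subtype.ext (Prod.ext rfl (map_smul s.1 c (g.1 u)))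
  map_zero' := ContinuousMap.ext fun u => Subtype.ext (Prod.ext rfl (map_zero s.1))
  map_add' f g :=
    ContinuousMap.ext fun u => Subtype.ext (Prod.ext rfl (map_add s.1 (f.1 u) (g.1 u)))
  map_mul' f g :=
    ContinuousMap.ext fun u => Subtype.ext (Prod.ext rfl (map_mul s.1 (f.1 u) (g.1 u)))

lemma nalgHomotopic_coneIotaHom_zero {π : D ⟶ A} {s : A ⟶ D} (hs : s ≫ π = 𝟙 A) :
    NAlgHomotopic (coneIotaHom π).1 0 := by
  refine ⟨coneIotaNullhomotopy hs, ContinuousMap.continuous_of_continuous_uncurry _ ?_,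
    fun g => ?_, fun g => ?_⟩
  · exact (((continuous_comp_curry shrinkToOne).comp
      (continuous_subtype_val.prodMap continuous_id)).prodMk
      (s.2.comp (continuous_eval.comp (continuous_subtype_val.prodMap continuous_id)))).subtype_mk _
  · refine Subtype.ext (Prod.ext (ContinuousMap.ext fun t => ?_) ?_)
    · exact show g.1 (σ (σ 0 * σ t)) = g.1 t by simp
    · exact show s.1 (g.1 0) = 0 by simp [susp_apply_zero g]
  · refine Subtype.ext (Prod.ext (ContinuousMap.ext fun t => ?_) ?_)
    · exact show g.1 (σ (σ 1 * σ t)) = 0 by simpa using susp_apply_one g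
    · exact show s.1 (g.1 1) = 0 by simp [susp_apply_one g]

end Homotopies

section SplitExactness

variable {𝒞 : Type*} [Category 𝒞] [Preadditive 𝒞] {F : BanAlg ⥤ 𝒞} {B D A : BanAlg}

lemma mono_map_coneEpsHom (hh : HomotopyInvariant F) (hF : HalfExactFunctor F) {π : D ⟶ A}
    {s : A ⟶ D} (hs : s ≫ π = 𝟙 A) : Mono (F.map (coneEpsHom π)) :=
  hF.mono_map_of_map_eq_zero (isExtensionHom_coneIotaHom π) (isSemiSplit_coneEpsHom π)
    (hh.map_eq_zero hF (nalgHomotopic_coneIotaHom_zero hs))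

lemma mono_map_kerEndPathsToCone (hh : HomotopyInvariant F) (hF : HalfExactFunctor F)
    {π : D ⟶ A} (h : IsSemiSplit π) : Mono (F.map (kerEndPathsToCone π)) := by
  refine hF.mono_map_of_map_eq_zero (isExtensionHom_kerConeIncl h)
    (isSemiSplit_kerEndPathsToCone h) ?_
  rw [← Category.id_comp (kerConeIncl π), F.map_comp,
    hh.map_eq_zero hF (nalgHomotopic_id_zero_kerCone π), Limits.zero_comp]

lemma mono_map_of_comp_eq_id (hh : HomotopyInvariant F) (hF : HalfExactFunctor F)
    {i : B ⟶ D} {π : D ⟶ A} {s : A ⟶ D} (hext : IsExtensionHom i π) (hs : s ≫ π = 𝟙 A) :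
    Mono (F.map i) := by
  have : IsSplitMono (constPaths hext) := .mk' ⟨_, constPaths_comp_constPathsRetraction hext⟩
  have := mono_map_kerEndPathsToCone hh hF (isSemiSplit_of_comp_eq_id hs)
  have := mono_map_coneEpsHom hh hF hs
  rw [← constPaths_comp_kerEndPathsToCone_comp_coneEpsHom hext, F.map_comp, F.map_comp]
  infer_instance

end SplitExactness

theorem splitExact_of_halfexact_homotopyInvariant
    {𝒞 : Type*} [Category 𝒞] [Preadditive 𝒞] [Limits.HasBinaryBiproducts 𝒞]
    (F : BanAlg ⥤ 𝒞)
    (hhtp : HomotopyInvariant F) (hhe : HalfExactFunctor F) :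
    SplitExactFunctor F := by
  intro B D A i π s hext hs
  have hss := isSemiSplit_of_comp_eq_id hs
  have hiπ := hhe.map_comp_map_eq_zero hext hss
  have hsπ : F.map s ≫ F.map π = 𝟙 _ := by rw [← F.map_comp, hs, F.map_id]
  have := mono_map_of_comp_eq_id hhtp hhe hext hs
  obtain ⟨r, hr⟩ : ∃ r, r ≫ F.map i = 𝟙 _ - F.map π ≫ F.map s :=
    ((hhe B D A i π hext hss _).1 _).1 (by simp [hsπ])
  let splitting : (ShortComplex.mk _ _ hiπ).Splitting :=
    { r, s := F.map s, s_g := hsπ, id := by simp [hr]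
      f_r := by rw [← cancel_mono (F.map i), Category.assoc, hr]; simp [reassoc_of% hiπ] }
  exact splitting.isoBinaryBiproduct.isIso_inv
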